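/- Let n ≥ 1 and let ξ_1, ξ_2, ξ_3 be independent random vectors, each uniformly distributed on the unit sphere of ℂ^n, and let Ξ = [ξ_1 ξ_2 ξ_3]. Then for every constant c > 0: E[det(I_3 + c·Ξ†Ξ)] = (1+c)³ − 3c²(1+c)/n + 2c³/n². -/

import Mathlib

open MeasureTheory ProbabilityTheory Filter Finset Matrix

/-- The Gram matrix `Ξ†Ξ` of the matrix `Ξ` with columns `ξ 0, …, ξ (k-1)` in `ℂ^n`. -/
noncomputable def grammat {n k : ℕ} (ξ : Fin k → (Fin n → ℂ)) : Matrix (Fin k) (Fin k) ℂ :=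
  (Matrix.of fun i j => ξ j i)ᴴ * (Matrix.of fun i j => ξ j i)

/-- `μ` is the uniform distribution on the unit sphere of `ℂ^n`: a probability measure,
carried by the unit sphere, invariant under the unitary group. -/
def IsUniformSphere (n : ℕ) (μ : Measure (Fin n → ℂ)) : Prop :=
  IsProbabilityMeasure μ ∧
  (∀ᵐ v ∂μ, ∑ i, Complex.normSq (v i) = 1) ∧
  ∀ U : Matrix.unitaryGroup (Fin n) ℂ,
    Measure.map (fun v => (U : Matrix (Fin n) (Fin n) ℂ).mulVec v) μ = μ

/-!
For unit vectors the Gram matrix `G` has unit diagonal, so expanding the determinant gives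
`det (1 + c G) = (1 + c)³ - c²(1 + c) Σ G_xy G_yx + c³ (G₀₁ G₁₂ G₂₀ + G₀₂ G₂₁ G₁₀)`.
Invariance under sign flips of single coordinates and under coordinate permutations forces
`E[v vᴴ] = I / n` (the trace is `E ‖v‖² = 1`). Expanding the Gram entries into monomials in the
coordinates and using independence of the columns, each `E[G_xy G_yx]` with `x ≠ y` is
`Σ_ij δ_ij / n² = 1 / n` and each `E[G_xy G_yz G_zx]` with distinct indices is `1 / n²`.
-/

open ComplexConjugate

lemma det_one_add_smul_fin_three {R : Type*} [CommRing R] (A : Matrix (Fin 3) (Fin 3) R)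
    (hA : ∀ i, A i i = 1) (c : R) :
    (1 + c • A).det
      = (1 + c) ^ 3 - c ^ 2 * (1 + c) * (A 0 1 * A 1 0 + A 0 2 * A 2 0 + A 1 2 * A 2 1)
        + c ^ 3 * (A 0 1 * A 1 2 * A 2 0 + A 0 2 * A 2 1 * A 1 0) := by
  simp only [det_fin_three, Matrix.add_apply, Matrix.smul_apply, one_apply, hA, smul_eq_mul,
    Fin.isValue, Fin.reduceEq, ↓reduceIte, mul_one]
  ring

lemma ae_pi_forall_of_ae {ι α : Type*} [Fintype ι] [MeasurableSpace α] {μ : Measure α}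
    [SigmaFinite μ] {p : α → Prop} (h : ∀ᵐ v ∂μ, p v) :
    ∀ᵐ ξ ∂(Measure.pi fun _ : ι => μ), ∀ x, p (ξ x) :=
  ae_all_iff.2 fun x => (Measure.tendsto_eval_ae_ae (i := x)).eventually h

section grammat

variable {n k : ℕ}

lemma grammat_apply (ξ : Fin k → Fin n → ℂ) (x y : Fin k) :
    grammat ξ x y = ∑ i, conj (ξ x i) * ξ y i := by
  simp [grammat, mul_apply]

lemma grammat_self (ξ : Fin k → Fin n → ℂ) {x : Fin k} (hx : ∑ i, Complex.normSq (ξ x i) = 1) :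
    grammat ξ x x = 1 := by
  simp_rw [grammat_apply, mul_comm (conj _), Complex.mul_conj]
  exact_mod_cast hx

lemma grammat_mul_grammat_eq_sum (ξ : Fin k → Fin n → ℂ) (x y : Fin k) :
    grammat ξ x y * grammat ξ y x
      = ∑ i, ∑ j, ∏ t, ξ (![x, y] t) (![j, i] t) * conj (ξ (![x, y] t) (![i, j] t)) := by
  simp only [grammat_apply, sum_mul_sum, Fin.prod_univ_two]
  refine sum_congr rfl fun i _ => sum_congr rfl fun j _ => ?_
  simp only [cons_val_zero, cons_val_one, cons_val_fin_one]
  ring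

lemma grammat_mul_grammat_mul_grammat_eq_sum (ξ : Fin k → Fin n → ℂ) (x y z : Fin k) :
    grammat ξ x y * grammat ξ y z * grammat ξ z x
      = ∑ i, ∑ j, ∑ l, ∏ t, ξ (![x, y, z] t) (![l, i, j] t)
          * conj (ξ (![x, y, z] t) (![i, j, l] t)) := by
  rw [grammat_apply, grammat_apply, grammat_apply, sum_mul_sum, sum_mul]
  refine sum_congr rfl fun i _ => ?_
  rw [sum_mul]
  refine sum_congr rfl fun j _ => ?_
  rw [mul_sum]
  refine sum_congr rfl fun l _ => ?_
  simp only [Fin.prod_univ_three, cons_val_zero, cons_val_one, Matrix.cons_val]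
  ring

end grammat

namespace IsUniformSphere

variable {n : ℕ} {μ : Measure (Fin n → ℂ)}

lemma ae_norm_le_one (hμ : IsUniformSphere n μ) : ∀ᵐ v ∂μ, ∀ i, ‖v i‖ ≤ 1 := by
  filter_upwards [hμ.2.1] with v hv i
  have : ‖v i‖ ^ 2 ≤ 1 := by
    rw [Complex.sq_norm, ← hv]
    exact single_le_sum (fun k _ => Complex.normSq_nonneg (v k)) (mem_univ i)
  nlinarith [norm_nonneg (v i)]

lemma integrable_mul_conj (hμ : IsUniformSphere n μ) (i j : Fin n) :
    Integrable (fun v : Fin n → ℂ => v i * conj (v j)) μ := by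
  have := hμ.1
  refine Integrable.of_bound (by fun_prop) 1 ?_
  filter_upwards [hμ.ae_norm_le_one] with v hv
  simpa using mul_le_one₀ (hv i) (norm_nonneg _) (hv j)

lemma integral_comp_mulVec (hμ : IsUniformSphere n μ) {U : Matrix (Fin n) (Fin n) ℂ}
    (hU : U ∈ unitaryGroup (Fin n) ℂ) {f : (Fin n → ℂ) → ℂ} (hf : AEStronglyMeasurable f μ) :
    ∫ v, f (U *ᵥ v) ∂μ = ∫ v, f v ∂μ := by
  have hmap : μ.map (U *ᵥ ·) = μ := hμ.2.2 ⟨U, hU⟩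
  rw [← integral_map (by fun_prop) (by rwa [hmap]), hmap]

lemma integral_mul_conj_of_ne (hμ : IsUniformSphere n μ) {i j : Fin n} (hij : i ≠ j) :
    ∫ v, v i * conj (v j) ∂μ = 0 := by
  set d : Fin n → ℂ := Function.update 1 i (-1)
  have hU : diagonal d ∈ unitaryGroup (Fin n) ℂ := by
    rw [mem_unitaryGroup_iff', star_eq_conjTranspose, diagonal_conjTranspose,
      diagonal_mul_diagonal, ← diagonal_one]
    congr 1
    ext k
    by_cases hk : k = i <;> simp [d, hk]
  have h := hμ.integral_comp_mulVec hU (hμ.integrable_mul_conj i j).aestronglyMeasurable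
  simp only [mulVec_diagonal, d, Function.update_self, Function.update_of_ne hij.symm,
    Pi.one_apply, one_mul, neg_mul, integral_neg] at h
  linear_combination -h / 2

lemma integral_mul_conj_self (hμ : IsUniformSphere n μ) (i : Fin n) :
    ∫ v, v i * conj (v i) ∂μ = (n : ℂ)⁻¹ := by
  have := hμ.1
  have hperm : ∀ j, ∫ v, v j * conj (v j) ∂μ = ∫ v, v i * conj (v i) ∂μ := fun j => by
    have hU : (Equiv.swap i j).permMatrix ℂ ∈ unitaryGroup (Fin n) ℂ := by
      rw [mem_unitaryGroup_iff, star_eq_conjTranspose, conjTranspose_permMatrix,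
        ← permMatrix_mul, inv_mul_cancel, permMatrix_one]
    have h := hμ.integral_comp_mulVec hU (hμ.integrable_mul_conj i i).aestronglyMeasurable
    simpa [permMatrix_mulVec] using h
  have hsum : ∑ j, ∫ v, v j * conj (v j) ∂μ = 1 := by
    rw [← integral_finsetSum _ fun j _ => hμ.integrable_mul_conj j j]
    have : ∀ᵐ v ∂μ, ∑ j, v j * conj (v j) = 1 := by
      filter_upwards [hμ.2.1] with v hv
      simp_rw [Complex.mul_conj]
      exact_mod_cast hv
    simp [integral_congr_ae this]
  simp only [hperm, sum_const, card_univ, Fintype.card_fin, nsmul_eq_mul] at hsum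
  exact eq_inv_of_mul_eq_one_right hsum

lemma integral_mul_conj (hμ : IsUniformSphere n μ) (i j : Fin n) :
    ∫ v, v i * conj (v j) ∂μ = if i = j then (n : ℂ)⁻¹ else 0 := by
  split_ifs with hij
  · exact hij ▸ hμ.integral_mul_conj_self i
  · exact hμ.integral_mul_conj_of_ne hij

section monomial

variable {ι : Type*} [Fintype ι] {m : ℕ}

lemma integral_prod_mul_conj (hμ : IsUniformSphere n μ) {e : Fin m → ι}
    (he : Function.Injective e) (a b : Fin m → Fin n) :
    ∫ ξ, ∏ t, ξ (e t) (a t) * conj (ξ (e t) (b t)) ∂(Measure.pi fun _ : ι => μ)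
      = ∏ t, if a t = b t then (n : ℂ)⁻¹ else 0 := by
  have := hμ.1
  have hind : iIndepFun (fun t (ξ : ι → Fin n → ℂ) => ξ (e t)) (Measure.pi fun _ => μ) :=
    (iIndepFun_pi (X := fun _ => id) fun _ => aemeasurable_id).precomp he
  rw [hind.integral_fun_prod_comp (f := fun t v => v (a t) * conj (v (b t)))
    (fun _ => (measurable_pi_apply _).aemeasurable)
    (fun t => by rw [(measurePreserving_eval _ (e t)).map_eq]; fun_prop)]
  refine prod_congr rfl fun t _ => ?_
  exact (integral_comp_eval (μ := fun _ => μ) (i := e t)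
    (hμ.integrable_mul_conj (a t) (b t)).aestronglyMeasurable).trans (hμ.integral_mul_conj _ _)

lemma integrable_prod_mul_conj (hμ : IsUniformSphere n μ) (e : Fin m → ι) (a b : Fin m → Fin n) :
    Integrable (fun ξ => ∏ t, ξ (e t) (a t) * conj (ξ (e t) (b t)))
      (Measure.pi fun _ : ι => μ) := by
  have := hμ.1
  refine Integrable.of_bound (by fun_prop) 1 ?_
  filter_upwards [ae_pi_forall_of_ae hμ.ae_norm_le_one] with ξ hξ
  rw [norm_prod]
  refine prod_le_one (fun _ _ => norm_nonneg _) fun t _ => ?_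
  simpa using mul_le_one₀ (hξ _ _) (norm_nonneg _) (hξ _ _)

end monomial

variable {k : ℕ}

lemma integrable_grammat_mul_grammat (hμ : IsUniformSphere n μ) (x y : Fin k) :
    Integrable (fun ξ => grammat ξ x y * grammat ξ y x) (Measure.pi fun _ => μ) := by
  simp_rw [grammat_mul_grammat_eq_sum]
  exact integrable_finsetSum _ fun i _ => integrable_finsetSum _ fun j _ =>
    hμ.integrable_prod_mul_conj _ _ _

lemma integrable_grammat_mul_grammat_mul_grammat (hμ : IsUniformSphere n μ) (x y z : Fin k) :
    Integrable (fun ξ => grammat ξ x y * grammat ξ y z * grammat ξ z x)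
      (Measure.pi fun _ => μ) := by
  simp_rw [grammat_mul_grammat_mul_grammat_eq_sum]
  exact integrable_finsetSum _ fun i _ => integrable_finsetSum _ fun j _ =>
    integrable_finsetSum _ fun l _ => hμ.integrable_prod_mul_conj _ _ _

lemma integral_grammat_mul_grammat (hμ : IsUniformSphere n μ) {x y : Fin k} (hxy : x ≠ y) :
    ∫ ξ, grammat ξ x y * grammat ξ y x ∂(Measure.pi fun _ => μ) = (n : ℂ)⁻¹ := by
  have he : Function.Injective ![x, y] := by
    intro s t
    fin_cases s <;> fin_cases t <;> simp [hxy, hxy.symm]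
  simp_rw [grammat_mul_grammat_eq_sum]
  rw [integral_finsetSum _ fun i _ => integrable_finsetSum _ fun j _ =>
    hμ.integrable_prod_mul_conj _ _ _]
  simp_rw [integral_finsetSum _ fun j _ => hμ.integrable_prod_mul_conj _ _ _,
    hμ.integral_prod_mul_conj he]
  rcases eq_or_ne (n : ℂ) 0 with hn | hn <;> simp [Fin.prod_univ_two, eq_comm, hn]

lemma integral_grammat_mul_grammat_mul_grammat (hμ : IsUniformSphere n μ) {x y z : Fin k}
    (hxy : x ≠ y) (hxz : x ≠ z) (hyz : y ≠ z) :
    ∫ ξ, grammat ξ x y * grammat ξ y z * grammat ξ z x ∂(Measure.pi fun _ => μ)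
      = (n : ℂ)⁻¹ ^ 2 := by
  have he : Function.Injective ![x, y, z] := by
    intro s t
    fin_cases s <;> fin_cases t <;> simp [hxy, hxz, hyz, hxy.symm, hxz.symm, hyz.symm]
  simp_rw [grammat_mul_grammat_mul_grammat_eq_sum]
  rw [integral_finsetSum _ fun i _ => integrable_finsetSum _ fun j _ =>
    integrable_finsetSum _ fun l _ => hμ.integrable_prod_mul_conj _ _ _]
  simp_rw [integral_finsetSum _ fun j _ => integrable_finsetSum _ fun l _ =>
    hμ.integrable_prod_mul_conj _ _ _, integral_finsetSum _ fun l _ =>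
    hμ.integrable_prod_mul_conj _ _ _, hμ.integral_prod_mul_conj he]
  rcases eq_or_ne (n : ℂ) 0 with hn | hn <;> simp [Fin.prod_univ_three, eq_comm, hn]
  field_simp

lemma det_one_add_smul_grammat_ae_eq (hμ : IsUniformSphere n μ) (c : ℂ) :
    (fun ξ => (1 + c • grammat ξ).det) =ᵐ[Measure.pi fun _ : Fin 3 => μ] fun ξ =>
      (1 + c) ^ 3 - c ^ 2 * (1 + c) * (grammat ξ 0 1 * grammat ξ 1 0
          + grammat ξ 0 2 * grammat ξ 2 0 + grammat ξ 1 2 * grammat ξ 2 1)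
        + c ^ 3 * (grammat ξ 0 1 * grammat ξ 1 2 * grammat ξ 2 0
          + grammat ξ 0 2 * grammat ξ 2 1 * grammat ξ 1 0) := by
  have := hμ.1
  filter_upwards [ae_pi_forall_of_ae hμ.2.1] with ξ hξ
  exact det_one_add_smul_fin_three _ (fun x => grammat_self ξ (hξ x)) c

lemma integrable_det_one_add_smul_grammat (hμ : IsUniformSphere n μ) (c : ℂ) :
    Integrable (fun ξ => (1 + c • grammat ξ).det) (Measure.pi fun _ : Fin 3 => μ) := by
  have := hμ.1
  have h2 := hμ.integrable_grammat_mul_grammat (k := 3)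
  have h3 := hμ.integrable_grammat_mul_grammat_mul_grammat (k := 3)
  refine Integrable.congr ?_ (hμ.det_one_add_smul_grammat_ae_eq c).symm
  exact ((integrable_const _).sub ((((h2 0 1).add (h2 0 2)).add (h2 1 2)).const_mul _)).add
    (((h3 0 1 2).add (h3 0 2 1)).const_mul _)

lemma integral_det_one_add_smul_grammat (hμ : IsUniformSphere n μ) (c : ℂ) :
    ∫ ξ, (1 + c • grammat ξ).det ∂(Measure.pi fun _ : Fin 3 => μ)
      = (1 + c) ^ 3 - c ^ 2 * (1 + c) * (3 * (n : ℂ)⁻¹) + c ^ 3 * (2 * (n : ℂ)⁻¹ ^ 2) := by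
  have := hμ.1
  have h01 := hμ.integrable_grammat_mul_grammat (k := 3) 0 1
  have h02 := hμ.integrable_grammat_mul_grammat (k := 3) 0 2
  have h12 := hμ.integrable_grammat_mul_grammat (k := 3) 1 2
  have h012 := hμ.integrable_grammat_mul_grammat_mul_grammat (k := 3) 0 1 2
  have h021 := hμ.integrable_grammat_mul_grammat_mul_grammat (k := 3) 0 2 1
  rw [integral_congr_ae (hμ.det_one_add_smul_grammat_ae_eq c), integral_add, integral_sub,
    integral_const, integral_const_mul, integral_const_mul, integral_add, integral_add,
    integral_add, hμ.integral_grammat_mul_grammat (by decide),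
    hμ.integral_grammat_mul_grammat (by decide), hμ.integral_grammat_mul_grammat (by decide),
    hμ.integral_grammat_mul_grammat_mul_grammat (by decide) (by decide) (by decide),
    hμ.integral_grammat_mul_grammat_mul_grammat (by decide) (by decide) (by decide)]
  · simp only [probReal_univ, one_smul]
    ring
  all_goals fun_prop

end IsUniformSphere

theorem stmt6_general (n : ℕ) (μ : Measure (Fin n → ℂ)) (hμ : IsUniformSphere n μ) (c : ℝ) :
    (∫ ξ : Fin 3 → Fin n → ℂ,
        ((1 + (c : ℂ) • grammat ξ).det.re) ∂(Measure.pi fun _ : Fin 3 => μ))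
      = (1 + c) ^ 3 - 3 * c ^ 2 * (1 + c) / n + 2 * c ^ 3 / n ^ 2 := by
  have h := integral_re (hμ.integrable_det_one_add_smul_grammat c)
  simp only [RCLike.re_to_complex] at h
  rw [h, hμ.integral_det_one_add_smul_grammat, ← Complex.ofReal_natCast]
  norm_cast
  push_cast
  ring

/-- `E[det(I₃ + c Ξ†Ξ)] = (1+c)³ − 3c²(1+c)/n + 2c³/n²` for `Ξ` with three
i.i.d. columns uniform on the unit sphere of `ℂ^n`. -/
theorem stmt6 (n : ℕ) (hn : 1 ≤ n) (μ : Measure (Fin n → ℂ)) (hμ : IsUniformSphere n μ)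
    (c : ℝ) (hc : 0 < c) :
    (∫ ξ : Fin 3 → Fin n → ℂ,
        ((1 + (c : ℂ) • grammat ξ).det.re) ∂(Measure.pi fun _ : Fin 3 => μ))
      = (1 + c) ^ 3 - 3 * c ^ 2 * (1 + c) / n + 2 * c ^ 3 / n ^ 2 :=
  stmt6_general n μ hμ c
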